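/- arXiv:1610.03029 — 6 statements merged into one kernel-verified Lean document; each statement's English description precedes it below -/
import Mathlib

section
/- If every connected component of the correlation graph associated with a family of r-locally consistent distributions {D_S} has size at most r, then the covariance matrix of {D_S} is positive semidefinite. -/
/-- A family `{D_S}` of distributions over `[q]^S` is `r`-locally consistent if
for all `T ⊆ S` with `|S| ≤ r`, the marginal of `D_S` on `T` equals `D_T`. -/
def LocallyConsistent (n q r : ℕ)
    (D : (S : Finset (Fin n)) → ((↑S : Set (Fin n)) → Fin q) → ℝ) : Prop :=
  ∀ (S T : Finset (Fin n)) (hTS : T ⊆ S), S.card ≤ r → ∀ β,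
    D T β = ∑ x : ((↑S : Set (Fin n)) → Fin q),
      if ∀ i : (↑T : Set (Fin n)), x (Set.inclusion (Finset.coe_subset.mpr hTS) i) = β i then D S x else 0

/-- `D_{{u}}(x_u = a)`. -/
def singleProb {n q : ℕ}
    (D : (S : Finset (Fin n)) → ((↑S : Set (Fin n)) → Fin q) → ℝ)
    (u : Fin n) (a : Fin q) : ℝ :=
  D {u} (fun _ => a)

/-- `D_{{u,v}}(x_u = a ∧ x_v = b)` (with the diagonal convention for `u = v`). -/
noncomputable def pairProb {n q : ℕ}
    (D : (S : Finset (Fin n)) → ((↑S : Set (Fin n)) → Fin q) → ℝ)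
    (u v : Fin n) (a b : Fin q) : ℝ :=
  ∑ x : ((↑({u, v} : Finset (Fin n)) : Set (Fin n)) → Fin q),
    if x ⟨u, Finset.mem_insert_self u {v}⟩ = a ∧
       x ⟨v, Finset.mem_insert_of_mem (Finset.mem_singleton_self v)⟩ = b
    then D {u, v} x else 0

/-- The covariance matrix of the family `{D_S}`. -/
noncomputable def covMatrix {n q : ℕ}
    (D : (S : Finset (Fin n)) → ((↑S : Set (Fin n)) → Fin q) → ℝ) :
    Matrix (Fin n × Fin q) (Fin n × Fin q) ℝ :=
  Matrix.of fun p p' =>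
    pairProb D p.1 p'.1 p.2 p'.2 - singleProb D p.1 p.2 * singleProb D p'.1 p'.2

/-- The correlation graph: `u ~ v` iff `u ≠ v` and some covariance entry
between `u` and `v` is nonzero. -/
noncomputable def corrGraph {n q : ℕ}
    (D : (S : Finset (Fin n)) → ((↑S : Set (Fin n)) → Fin q) → ℝ) :
    SimpleGraph (Fin n) :=
  SimpleGraph.fromRel (fun u v => ∃ a b, covMatrix D (u, a) (v, b) ≠ 0)


/-!
On a set `V` of at most `r` variables, local consistency turns the covariance entries
`Σ((u,a),(v,b))`, `u, v ∈ V`, into covariances of the indicators `1[x_u = a]` under the single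
distribution `D_V`. A covariance matrix of a distribution is the mixture `E[(X - EX)(X - EX)ᵀ]` of
rank-one PSD matrices, hence PSD. Entries between different components of the correlation graph
vanish, so `Σ` is the sum over the components of these PSD blocks.
-/

open Finset Matrix

noncomputable def Matrix.finCovariance {Ω ι : Type*} [Fintype Ω]
    (p : Ω → ℝ) (X : ι → Ω → ℝ) : Matrix ι ι ℝ :=
  of fun i j => ∑ ω, p ω * (X i ω * X j ω) - (∑ ω, p ω * X i ω) * ∑ ω, p ω * X j ω

theorem Matrix.posSemidef_finCovariance {Ω ι : Type*} [Fintype Ω] [Fintype ι]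
    {p : Ω → ℝ} (hp : ∀ ω, 0 ≤ p ω) (hp1 : ∑ ω, p ω = 1) (X : ι → Ω → ℝ) :
    (finCovariance p X).PosSemidef := by
  set μ : ι → ℝ := fun i => ∑ ω, p ω * X i ω
  have hcentered : finCovariance p X =
      ∑ ω, p ω • vecMulVec (fun i => X i ω - μ i) (fun i => X i ω - μ i) := by
    ext i j
    simp only [finCovariance, of_apply, sum_apply, smul_apply, vecMulVec_apply, smul_eq_mul]
    have hexpand : ∀ ω, p ω * ((X i ω - μ i) * (X j ω - μ j)) =
        p ω * (X i ω * X j ω) - μ j * (p ω * X i ω) - μ i * (p ω * X j ω) +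
          μ i * μ j * p ω := fun ω => by ring
    simp only [hexpand, sum_add_distrib, sum_sub_distrib, ← mul_sum, hp1, μ]
    ring
  rw [hcentered]
  exact posSemidef_sum _ fun ω _ => (posSemidef_vecMulVec_self_star _).smul (hp ω)

lemma SimpleGraph.ConnectedComponent.supp_connectedComponentMk {V : Type*} (G : SimpleGraph V)
    (u : V) : (G.connectedComponentMk u).supp = {v | G.Reachable u v} := by
  ext v
  simp only [mem_supp_iff, ConnectedComponent.eq, Set.mem_ofPred_eq]
  exact SimpleGraph.reachable_comm

section Marginals

variable {n q r : ℕ} {D : (S : Finset (Fin n)) → ((↑S : Set (Fin n)) → Fin q) → ℝ}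
  {V : Finset (Fin n)}

noncomputable def coordIndicator (V : Finset (Fin n)) (p : Fin n × Fin q)
    (x : (↑V : Set (Fin n)) → Fin q) : ℝ :=
  if h : p.1 ∈ V then if x ⟨p.1, h⟩ = p.2 then 1 else 0 else 0

lemma LocallyConsistent.sum_mul_eq_sum_mul_restrict (hD : LocallyConsistent n q r D)
    {T : Finset (Fin n)} (hTV : T ⊆ V) (hV : V.card ≤ r)
    (f : ((↑T : Set (Fin n)) → Fin q) → ℝ) :
    ∑ β, D T β * f β =
      ∑ x, D V x * f (fun i => x (Set.inclusion (coe_subset.mpr hTV) i)) := by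
  simp only [hD V T hTV hV, sum_mul]
  rw [sum_comm]
  refine sum_congr rfl fun x _ => ?_
  have hrestrict : ∀ β : (↑T : Set (Fin n)) → Fin q,
      (∀ i, x (Set.inclusion (coe_subset.mpr hTV) i) = β i) ↔
        (fun i => x (Set.inclusion (coe_subset.mpr hTV) i)) = β := fun _ => funext_iff.symm
  simp only [hrestrict, ite_mul, zero_mul, sum_ite_eq, mem_univ, if_true]

lemma LocallyConsistent.singleProb_eq (hD : LocallyConsistent n q r D) (hV : V.card ≤ r)
    {u : Fin n} (hu : u ∈ V) (a : Fin q) :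
    singleProb D u a = ∑ x, D V x * coordIndicator V (u, a) x := by
  rw [singleProb, hD V {u} (singleton_subset_iff.mpr hu) hV]
  refine sum_congr rfl fun x _ => ?_
  have hsingle : (∀ i : (↑({u} : Finset (Fin n)) : Set (Fin n)),
      x (Set.inclusion (coe_subset.mpr (singleton_subset_iff.mpr hu)) i) = a) ↔
      x ⟨u, hu⟩ = a :=
    ⟨fun h => h ⟨u, mem_singleton_self u⟩, fun h ⟨_, hi⟩ => by
      rw [coe_singleton, Set.mem_singleton_iff] at hi; subst hi; exact h⟩
  simp only [hsingle, coordIndicator, hu, dif_pos, mul_ite, mul_one, mul_zero]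

lemma LocallyConsistent.pairProb_eq (hD : LocallyConsistent n q r D) (hV : V.card ≤ r)
    {u v : Fin n} (hu : u ∈ V) (hv : v ∈ V) (a b : Fin q) :
    pairProb D u v a b =
      ∑ x, D V x * (coordIndicator V (u, a) x * coordIndicator V (v, b) x) := by
  have huv : ({u, v} : Finset (Fin n)) ⊆ V := insert_subset hu (singleton_subset_iff.mpr hv)
  have hmarg := hD.sum_mul_eq_sum_mul_restrict huv hV
    (fun β => if β ⟨u, mem_insert_self u {v}⟩ = a ∧
       β ⟨v, mem_insert_of_mem (mem_singleton_self v)⟩ = b then 1 else 0)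
  simp only [mul_ite, mul_one, mul_zero] at hmarg
  rw [pairProb, hmarg]
  refine sum_congr rfl fun x _ => ?_
  simp only [coordIndicator, hu, hv, dif_pos, Set.inclusion]
  split_ifs <;> simp_all

lemma LocallyConsistent.finCovariance_coordIndicator_apply (hD : LocallyConsistent n q r D)
    (hV : V.card ≤ r) (p p' : Fin n × Fin q) :
    finCovariance (D V) (coordIndicator V) p p' =
      if p.1 ∈ V ∧ p'.1 ∈ V then covMatrix D p p' else 0 := by
  by_cases hp : p.1 ∈ V
  · by_cases hp' : p'.1 ∈ V
    · simp only [finCovariance, covMatrix, of_apply, hp, hp', and_self, if_true,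
        hD.pairProb_eq hV hp hp', hD.singleProb_eq hV hp, hD.singleProb_eq hV hp']
    · simp [finCovariance, coordIndicator, hp']
  · simp [finCovariance, coordIndicator, hp]

end Marginals

lemma reachable_corrGraph_of_covMatrix_ne_zero {n q : ℕ}
    {D : (S : Finset (Fin n)) → ((↑S : Set (Fin n)) → Fin q) → ℝ} {p p' : Fin n × Fin q}
    (h : covMatrix D p p' ≠ 0) : (corrGraph D).Reachable p.1 p'.1 := by
  by_cases hpp' : p.1 = p'.1
  · exact hpp' ▸ SimpleGraph.Reachable.refl _
  · exact SimpleGraph.Adj.reachable <|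
      (SimpleGraph.fromRel_adj _ _ _).mpr ⟨hpp', Or.inl ⟨p.2, p'.2, h⟩⟩

open scoped Classical in
lemma LocallyConsistent.covMatrix_eq_sum_finCovariance {n q r : ℕ}
    {D : (S : Finset (Fin n)) → ((↑S : Set (Fin n)) → Fin q) → ℝ}
    (hD : LocallyConsistent n q r D)
    (hsize : ∀ C : (corrGraph D).ConnectedComponent, C.supp.toFinset.card ≤ r) :
    covMatrix D = ∑ C : (corrGraph D).ConnectedComponent,
      finCovariance (D C.supp.toFinset) (coordIndicator C.supp.toFinset) := by
  ext p p'
  simp only [Matrix.sum_apply, hD.finCovariance_coordIndicator_apply (hsize _), Set.mem_toFinset,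
    SimpleGraph.ConnectedComponent.mem_supp_iff]
  by_cases h : (corrGraph D).Reachable p.1 p'.1
  · simp [SimpleGraph.ConnectedComponent.eq.mpr h]
  · simp [not_imp_comm.mp reachable_corrGraph_of_covMatrix_ne_zero h]

theorem stmt_7_general {n q r : ℕ}
    (D : (S : Finset (Fin n)) → ((↑S : Set (Fin n)) → Fin q) → ℝ)
    (hD : LocallyConsistent n q r D)
    (hdist : ∀ S : Finset (Fin n), S.card ≤ r →
      (∀ x, 0 ≤ D S x) ∧ ∑ x, D S x = 1)
    (hcomp : ∀ u : Fin n,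
      ({v | (corrGraph D).Reachable u v} : Set (Fin n)).ncard ≤ r) :
    (covMatrix D).PosSemidef := by
  classical
  have hsize : ∀ C : (corrGraph D).ConnectedComponent, C.supp.toFinset.card ≤ r := by
    intro C
    obtain ⟨u, hu⟩ := C.nonempty_supp
    rw [← Set.ncard_eq_toFinset_card', ← (C.mem_supp_iff u).mp hu,
      SimpleGraph.ConnectedComponent.supp_connectedComponentMk]
    exact hcomp u
  rw [hD.covMatrix_eq_sum_finCovariance hsize]
  exact posSemidef_sum _ fun C _ =>
    posSemidef_finCovariance (hdist _ (hsize C)).1 (hdist _ (hsize C)).2 _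

/-- If every connected component of the correlation graph of an `r`-locally
consistent family of distributions has size at most `r`, then the covariance
matrix is positive semidefinite. -/
theorem stmt_7 {n q r : ℕ} (hr : 2 ≤ r)
    (D : (S : Finset (Fin n)) → ((↑S : Set (Fin n)) → Fin q) → ℝ)
    (hD : LocallyConsistent n q r D)
    (hdist : ∀ S : Finset (Fin n), S.card ≤ r →
      (∀ x, 0 ≤ D S x) ∧ ∑ x, D S x = 1)
    (hcomp : ∀ u : Fin n,
      ({v | (corrGraph D).Reachable u v} : Set (Fin n)).ncard ≤ r) :
    (covMatrix D).PosSemidef :=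
  stmt_7_general D hD hdist hcomp
end

section
/- A bad structure W for variables u and v satisfies |Γ(W)| ≤ (k − t/2)|W| + 1. -/
/-- The set of `W`-boundary variables: variables contained in exactly one
constraint of `W`. -/
def bdry {V ι : Type*} [DecidableEq V] [DecidableEq ι]
    (scope : ι → Finset V) (W : Finset ι) : Finset V :=
  (W.biUnion scope).filter (fun v => (W.filter (fun c => v ∈ scope c)).card = 1)

/-- A bad structure for `u` and `v`: a set of constraints `W` with
`u, v ∈ Γ(W)`, whose induced hypergraph is connected, and every constraint of
which contains at most `k − t` `W`-boundary variables other than `u` and `v`. -/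
def BadStructure {V ι : Type*} [DecidableEq V] [DecidableEq ι]
    (scope : ι → Finset V) (k t : ℕ) (W : Finset ι) (u v : V) : Prop :=
  u ∈ W.biUnion scope ∧ v ∈ W.biUnion scope ∧
  (SimpleGraph.fromRel
      (fun c c' : {x // x ∈ W} => ((scope c.1) ∩ (scope c'.1)).Nonempty)).Connected ∧
  ∀ c ∈ W, ((scope c ∩ bdry scope W) \ {u, v}).card ≤ k - t

/-- A bad structure `W` for `u` and `v` satisfies
`|Γ(W)| ≤ (k − t/2)|W| + 1`. -/
theorem stmt_8 {V ι : Type*} [DecidableEq V] [DecidableEq ι]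
    [Fintype V] [Fintype ι]
    (scope : ι → Finset V) (k t : ℕ) (hk : ∀ c, (scope c).card = k)
    (htk : t ≤ k) (u v : V) (W : Finset ι)
    (hbad : BadStructure scope k t W u v) :
    ((W.biUnion scope).card : ℝ) ≤ ((k : ℝ) - (t : ℝ) / 2) * W.card + 1 := by
  obtain ⟨hu, hv, -, hcon⟩ := hbad
  set Γ := W.biUnion scope with hΓ
  set B := bdry scope W with hB
  have hBsub : B ⊆ Γ := Finset.filter_subset _ _
  have hdeg : ∀ x ∈ Γ, 1 ≤ (W.filter (fun c => x ∈ scope c)).card := by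
    intro x hx
    rw [Nat.one_le_iff_ne_zero, Ne, Finset.card_eq_zero, ← Ne,
      ← Finset.nonempty_iff_ne_empty]
    obtain ⟨c, hc, hxc⟩ := Finset.mem_biUnion.mp hx
    exact ⟨c, Finset.mem_filter.mpr ⟨hc, hxc⟩⟩
  have hBdef : ∀ x ∈ Γ, (x ∈ B ↔ (W.filter (fun c => x ∈ scope c)).card = 1) := by
    intro x hx
    simp only [hB, bdry, Finset.mem_filter]
    exact and_iff_right (hΓ ▸ hx)
  -- double counting
  have hsum : ∑ c ∈ W, (scope c).card = ∑ x ∈ Γ, (W.filter (fun c => x ∈ scope c)).card := by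
    have : ∀ c ∈ W, (scope c).card = ∑ x ∈ Γ, (if x ∈ scope c then 1 else 0) := by
      intro c hc
      rw [Finset.sum_ite_mem, Finset.sum_const, smul_eq_mul, mul_one,
        Finset.inter_eq_right.mpr (fun x hx => Finset.mem_biUnion.mpr ⟨c, hc, hx⟩)]
    rw [Finset.sum_congr rfl this, Finset.sum_comm]
    apply Finset.sum_congr rfl
    intro x hx
    rw [Finset.card_filter]
  have h2 : 2 * Γ.card ≤ k * W.card + B.card := by
    have key : ∑ x ∈ Γ, (2 : ℕ) ≤
        ∑ x ∈ Γ, ((W.filter (fun c => x ∈ scope c)).card + if x ∈ B then 1 else 0) := by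
      apply Finset.sum_le_sum
      intro x hx
      by_cases hxB : x ∈ B
      · simp [hxB, (hBdef x hx).mp hxB]
      · have h1 := hdeg x hx
        have hne : (W.filter (fun c => x ∈ scope c)).card ≠ 1 :=
          fun h => hxB ((hBdef x hx).mpr h)
        simp only [hxB, if_false, add_zero]
        omega
    rw [Finset.sum_add_distrib, ← hsum, Finset.sum_ite_mem,
      Finset.inter_eq_right.mpr hBsub, ← Finset.card_eq_sum_ones B,
      Finset.sum_const, smul_eq_mul] at key
    have : ∑ c ∈ W, (scope c).card = k * W.card := by
      rw [Finset.sum_congr rfl (fun c _ => hk c), Finset.sum_const, smul_eq_mul, mul_comm]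
    omega
  have h3 : (B \ {u, v}).card ≤ (k - t) * W.card := by
    have hsub : B \ {u, v} ⊆ W.biUnion (fun c => (scope c ∩ B) \ {u, v}) := by
      intro x hx
      obtain ⟨hxB, hxuv⟩ := Finset.mem_sdiff.mp hx
      obtain ⟨c, hc, hxc⟩ := Finset.mem_biUnion.mp (hBsub hxB)
      exact Finset.mem_biUnion.mpr ⟨c, hc,
        Finset.mem_sdiff.mpr ⟨Finset.mem_inter.mpr ⟨hxc, hxB⟩, hxuv⟩⟩
    calc (B \ {u, v}).card ≤ (W.biUnion (fun c => (scope c ∩ B) \ {u, v})).card :=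
          Finset.card_le_card hsub
      _ ≤ ∑ c ∈ W, ((scope c ∩ B) \ {u, v}).card := Finset.card_biUnion_le
      _ ≤ ∑ c ∈ W, (k - t) := Finset.sum_le_sum (fun c hc => hcon c hc)
      _ = (k - t) * W.card := by rw [Finset.sum_const, smul_eq_mul, mul_comm]
  have h4 : B.card ≤ (B \ {u, v}).card + 2 := by
    have : B ⊆ (B \ {u, v}) ∪ {u, v} := by
      intro x hx
      by_cases h : x ∈ ({u, v} : Finset V)
      · exact Finset.mem_union_right _ h
      · exact Finset.mem_union_left _ (Finset.mem_sdiff.mpr ⟨hx, h⟩)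
    calc B.card ≤ ((B \ {u, v}) ∪ {u, v}).card := Finset.card_le_card this
      _ ≤ (B \ {u, v}).card + ({u, v} : Finset V).card := Finset.card_union_le _ _
      _ ≤ (B \ {u, v}).card + 2 := by
          have := Finset.card_insert_le u ({v} : Finset V)
          simp at this ⊢
          omega
  have hN : 2 * Γ.card ≤ k * W.card + (k - t) * W.card + 2 := by omega
  have hR : (2 : ℝ) * Γ.card ≤ (k : ℝ) * W.card + ((k : ℝ) - t) * W.card + 2 := by
    have := Nat.cast_le (α := ℝ) |>.mpr hN
    push_cast [Nat.cast_sub htk] at this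
    linarith
  linarith
end

section
/- Let e_1, ..., e_ℓ be edges of a connected subgraph of G_bad(H) ordered so that each e_{i+1} shares a vertex with some earlier edge, with corresponding bad structures W_{e_1}, ..., W_{e_ℓ}, and let T_i = W_{e_1} ∪ ... ∪ W_{e_i}. Then |Γ(T_i)| ≤ (k − t/2)|T_i| + 1 for every i. -/
section Aux

variable {V ι : Type*} [DecidableEq V] [DecidableEq ι]

private lemma sum_deg (scope : ι → Finset V) (S : Finset ι) :
    ∑ v ∈ S.biUnion scope, (S.filter (fun c => v ∈ scope c)).card
      = ∑ c ∈ S, (scope c).card := by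
  simp only [Finset.card_filter]
  rw [Finset.sum_comm]
  refine Finset.sum_congr rfl fun c hc => ?_
  rw [← Finset.card_filter, Finset.filter_mem_eq_inter,
    Finset.inter_eq_right.2 (Finset.subset_biUnion_of_mem scope hc)]

private lemma deg_pos (scope : ι → Finset V) {S : Finset ι} {v : V}
    (hv : v ∈ S.biUnion scope) : 0 < (S.filter (fun c => v ∈ scope c)).card := by
  rw [Finset.card_pos]
  obtain ⟨c, hc, hvc⟩ := Finset.mem_biUnion.1 hv
  exact ⟨c, Finset.mem_filter.2 ⟨hc, hvc⟩⟩

private lemma two_mul_le (scope : ι → Finset V) (S : Finset ι) (N : Finset V)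
    (hN : N ⊆ S.biUnion scope) :
    2 * N.card ≤ (∑ v ∈ N, (S.filter (fun c => v ∈ scope c)).card)
      + (N.filter (fun v => (S.filter (fun c => v ∈ scope c)).card = 1)).card := by
  rw [Finset.card_filter, ← Finset.sum_add_distrib]
  calc 2 * N.card = ∑ _v ∈ N, 2 := by rw [Finset.sum_const, smul_eq_mul, mul_comm]
    _ ≤ _ := by
        refine Finset.sum_le_sum fun v hv => ?_
        have hp := deg_pos scope (hN hv)
        split_ifs with h <;> omega

private lemma bdry_bound (scope : ι → Finset V) {k t : ℕ} {Wi : Finset ι} {u v : V}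
    (hb : ∀ c ∈ Wi, ((scope c ∩ bdry scope Wi) \ {u, v}).card ≤ k - t)
    {A : Finset ι} (hA : A ⊆ Wi) {D : Finset V}
    (hD : ∀ x ∈ D, (∃ c ∈ A, x ∈ scope c) ∧ x ∈ bdry scope Wi) :
    (D \ {u, v}).card ≤ A.card * (k - t) := by
  calc (D \ {u, v}).card
      ≤ (A.biUnion (fun c => (scope c ∩ bdry scope Wi) \ {u, v})).card := by
        apply Finset.card_le_card
        intro x hx
        obtain ⟨hxD, hxuv⟩ := Finset.mem_sdiff.1 hx
        obtain ⟨⟨c, hc, hxc⟩, hxb⟩ := hD x hxD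
        exact Finset.mem_biUnion.2
          ⟨c, hc, Finset.mem_sdiff.2 ⟨Finset.mem_inter.2 ⟨hxc, hxb⟩, hxuv⟩⟩
    _ ≤ ∑ c ∈ A, ((scope c ∩ bdry scope Wi) \ {u, v}).card := Finset.card_biUnion_le
    _ ≤ ∑ _c ∈ A, (k - t) := Finset.sum_le_sum fun c hc => hb c (hA hc)
    _ = A.card * (k - t) := by rw [Finset.sum_const, smul_eq_mul]

private lemma biUnion_union' (s t : Finset ι) (f : ι → Finset V) :
    (s ∪ t).biUnion f = s.biUnion f ∪ t.biUnion f := by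
  ext x
  simp only [Finset.mem_biUnion, Finset.mem_union]
  constructor
  · rintro ⟨c, hc | hc, hx⟩
    · exact Or.inl ⟨c, hc, hx⟩
    · exact Or.inr ⟨c, hc, hx⟩
  · rintro (⟨c, hc, hx⟩ | ⟨c, hc, hx⟩)
    · exact ⟨c, Or.inl hc, hx⟩
    · exact ⟨c, Or.inr hc, hx⟩

end Aux

/-- Let `e_1, …, e_ℓ` (with endpoints `eu i`, `ev i`) be edges ordered so that
each later edge shares a vertex with some earlier edge, each induced by a bad
structure `W i`, and let `T_i = W 1 ∪ ⋯ ∪ W i`.  Then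
`|Γ(T_i)| ≤ (k − t/2)|T_i| + 1` for every `i`. -/
theorem stmt_10 {V ι : Type*} [DecidableEq V] [DecidableEq ι]
    [Fintype V] [Fintype ι]
    (scope : ι → Finset V) (k t : ℕ) (hk : ∀ c, (scope c).card = k)
    (htk : t ≤ k) (ℓ : ℕ) (eu ev : Fin ℓ → V) (W : Fin ℓ → Finset ι)
    (hbad : ∀ i, BadStructure scope k t (W i) (eu i) (ev i))
    (horder : ∀ i : Fin ℓ, 0 < i.1 → ∃ j : Fin ℓ, j < i ∧
      ((({eu i, ev i} : Finset V)) ∩ ({eu j, ev j} : Finset V)).Nonempty) :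
    ∀ i : Fin ℓ,
      ((((Finset.univ.filter (fun j : Fin ℓ => j ≤ i)).biUnion W).biUnion
          scope).card : ℝ) ≤
        ((k : ℝ) - (t : ℝ) / 2) *
          ((Finset.univ.filter (fun j : Fin ℓ => j ≤ i)).biUnion W).card + 1 := by
  suffices H : ∀ n : ℕ, ∀ i : Fin ℓ, i.1 = n →
      ((((Finset.univ.filter (fun j : Fin ℓ => j ≤ i)).biUnion W).biUnion
          scope).card : ℝ) ≤
        ((k : ℝ) - (t : ℝ) / 2) *
          ((Finset.univ.filter (fun j : Fin ℓ => j ≤ i)).biUnion W).card + 1 by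
    intro i; exact H i.1 i rfl
  intro n
  induction n with
  | zero =>
      intro i hi
      have hfil : (Finset.univ.filter (fun j : Fin ℓ => j ≤ i)) = {i} := by
        ext j
        simp only [Finset.mem_filter, Finset.mem_univ, true_and, Finset.mem_singleton,
          Fin.le_def, Fin.ext_iff, hi]
        omega
      rw [hfil, Finset.singleton_biUnion]
      -- base case: single bad structure
      obtain ⟨hu, hv, hconn, hB⟩ := hbad i
      set S := W i with hS
      set N := S.biUnion scope with hNdef
      have h2 := two_mul_le scope S N (le_refl _)
      have hsum : (∑ v ∈ N, (S.filter (fun c => v ∈ scope c)).card) = S.card * k := by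
        rw [hNdef, sum_deg scope S]
        simp [hk, mul_comm]
      have hDbd : (N.filter (fun v => (S.filter (fun c => v ∈ scope c)).card = 1))
          = bdry scope S := rfl
      set D := bdry scope S with hDdef
      have hD1 : (D \ ({eu i, ev i} : Finset V)).card ≤ S.card * (k - t) := by
        refine bdry_bound scope hB (le_refl _) fun x hx => ?_
        refine ⟨?_, hx⟩
        have hxN : x ∈ N := (Finset.mem_filter.1 hx).1
        exact Finset.mem_biUnion.1 hxN
      have hD2 : D.card ≤ (D \ ({eu i, ev i} : Finset V)).card + 2 := by
        have := Finset.card_sdiff_add_card_inter D ({eu i, ev i} : Finset V)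
        have hint : (D ∩ ({eu i, ev i} : Finset V)).card ≤ 2 := by
          calc (D ∩ ({eu i, ev i} : Finset V)).card
              ≤ ({eu i, ev i} : Finset V).card := Finset.card_le_card Finset.inter_subset_right
            _ ≤ 2 := by
                have := Finset.card_insert_le (eu i) ({ev i} : Finset V)
                simpa using this
        omega
      have hfinal : 2 * N.card ≤ S.card * k + (S.card * (k - t) + 2) := by
        rw [hsum, hDbd] at h2
        omega
      have hcast : ((k - t : ℕ) : ℝ) = (k : ℝ) - (t : ℝ) := Nat.cast_sub htk
      have hR : (2 : ℝ) * N.card ≤ (S.card : ℝ) * k + (S.card * ((k : ℝ) - t) + 2) := by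
        have := hfinal
        push_cast [hcast] at this ⊢
        exact_mod_cast this
      nlinarith [hR]
  | succ n ih =>
      intro i hi
      have hn : n < ℓ := by omega
      set i' : Fin ℓ := ⟨n, hn⟩ with hi'
      have hfil : (Finset.univ.filter (fun j : Fin ℓ => j ≤ i))
          = insert i (Finset.univ.filter (fun j : Fin ℓ => j ≤ i')) := by
        ext j
        simp only [Finset.mem_filter, Finset.mem_univ, true_and, Finset.mem_insert,
          Fin.le_def, Fin.ext_iff, hi, hi']
        omega
      set T := (Finset.univ.filter (fun j : Fin ℓ => j ≤ i')).biUnion W with hT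
      have hTi : (Finset.univ.filter (fun j : Fin ℓ => j ≤ i)).biUnion W = W i ∪ T := by
        rw [hfil, Finset.biUnion_insert]
      set A := W i \ T with hA
      have hAW : A ⊆ W i := Finset.sdiff_subset
      have hUnion : W i ∪ T = A ∪ T := (Finset.sdiff_union_self_eq_union).symm
      by_cases hAe : A = ∅
      · have hsub : W i ⊆ T := by
          rw [← Finset.sdiff_eq_empty_iff_subset]; exact hAe
        have : (Finset.univ.filter (fun j : Fin ℓ => j ≤ i)).biUnion W = T := by
          rw [hTi, Finset.union_eq_right.2 hsub]
        rw [this]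
        exact ih i' rfl
      · obtain ⟨a, haA⟩ := Finset.nonempty_iff_ne_empty.2 hAe
        have haW : a ∈ W i := hAW haA
        have haT : a ∉ T := (Finset.mem_sdiff.1 haA).2
        -- an endpoint of edge i that is already in Γ(T)
        have hEnd : ∃ x0 : V, x0 ∈ ({eu i, ev i} : Finset V) ∧ x0 ∈ T.biUnion scope := by
          obtain ⟨j, hji, x, hx⟩ := horder i (by omega)
          obtain ⟨hxi, hxj⟩ := Finset.mem_inter.1 hx
          refine ⟨x, hxi, ?_⟩
          have hjle : j ≤ i' := by
            rw [Fin.le_def]; have := hji; rw [Fin.lt_def, hi] at this; simp [hi']; omega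
          have hWjT : W j ⊆ T :=
            Finset.subset_biUnion_of_mem W
              (Finset.mem_filter.2 ⟨Finset.mem_univ _, hjle⟩)
          have hxj' : x ∈ (W j).biUnion scope := by
            rcases Finset.mem_insert.1 hxj with h | h
            · rw [h]; exact (hbad j).1
            · rw [Finset.mem_singleton.1 h]; exact (hbad j).2.1
          exact Finset.biUnion_subset_biUnion_of_subset_left scope hWjT hxj'
        obtain ⟨x0, hx0pair, hx0T⟩ := hEnd
        -- an "old" vertex in Γ(A)
        have hOld : ∃ w0 : V, w0 ∈ A.biUnion scope ∧ w0 ∈ T.biUnion scope := by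
          by_cases hWT : ((W i) ∩ T).Nonempty
          · obtain ⟨c', hc'⟩ := hWT
            obtain ⟨hc'W, hc'T⟩ := Finset.mem_inter.1 hc'
            obtain ⟨hu, hv, hconn, hB⟩ := hbad i
            have hreach := hconn.preconnected ⟨c', hc'W⟩ ⟨a, haW⟩
            obtain ⟨p⟩ := hreach
            obtain ⟨d, hd, hdf, hds⟩ := p.exists_boundary_dart
              {x : {x // x ∈ W i} | x.1 ∈ T} hc'T haT
            have hadj := d.adj
            rw [SimpleGraph.fromRel_adj] at hadj
            obtain ⟨hne, hr⟩ := hadj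
            have hsndA : d.snd.1 ∈ A := Finset.mem_sdiff.2 ⟨d.snd.2, hds⟩
            rcases hr with h | h
            · obtain ⟨w0, hw0⟩ := h
              obtain ⟨hw1, hw2⟩ := Finset.mem_inter.1 hw0
              exact ⟨w0, Finset.mem_biUnion.2 ⟨d.snd.1, hsndA, hw2⟩,
                Finset.mem_biUnion.2 ⟨d.fst.1, hdf, hw1⟩⟩
            · obtain ⟨w0, hw0⟩ := h
              obtain ⟨hw1, hw2⟩ := Finset.mem_inter.1 hw0
              exact ⟨w0, Finset.mem_biUnion.2 ⟨d.snd.1, hsndA, hw1⟩,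
                Finset.mem_biUnion.2 ⟨d.fst.1, hdf, hw2⟩⟩
          · have hAeq : A = W i := by
              rw [hA, Finset.sdiff_eq_self_iff_disjoint]
              rw [Finset.not_nonempty_iff_eq_empty] at hWT
              exact Finset.disjoint_left.2 fun c hc hc' =>
                (Finset.eq_empty_iff_forall_notMem.1 hWT c)
                  (Finset.mem_inter.2 ⟨hc, hc'⟩)
            refine ⟨x0, ?_, hx0T⟩
            rw [hAeq]
            rcases Finset.mem_insert.1 hx0pair with h | h
            · rw [h]; exact (hbad i).1
            · rw [Finset.mem_singleton.1 h]; exact (hbad i).2.1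
        obtain ⟨w0, hw0A, hw0T⟩ := hOld
        set N := A.biUnion scope \ T.biUnion scope with hN
        have hNsub : N ⊆ A.biUnion scope := Finset.sdiff_subset
        -- degree-1 vertices of N lie in bdry (W i)
        set D := N.filter (fun v => (A.filter (fun c => v ∈ scope c)).card = 1) with hD
        have hDmem : ∀ x ∈ D, (∃ c ∈ A, x ∈ scope c) ∧ x ∈ bdry scope (W i) := by
          intro x hx
          obtain ⟨hxN, hx1⟩ := Finset.mem_filter.1 hx
          have hxA : x ∈ A.biUnion scope := (Finset.mem_sdiff.1 hxN).1
          have hxnT : x ∉ T.biUnion scope := (Finset.mem_sdiff.1 hxN).2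
          refine ⟨Finset.mem_biUnion.1 hxA, ?_⟩
          have hfe : (W i).filter (fun c => x ∈ scope c)
              = A.filter (fun c => x ∈ scope c) := by
            ext c
            simp only [Finset.mem_filter]
            constructor
            · rintro ⟨hcW, hxc⟩
              refine ⟨Finset.mem_sdiff.2 ⟨hcW, fun hcT => ?_⟩, hxc⟩
              exact hxnT (Finset.mem_biUnion.2 ⟨c, hcT, hxc⟩)
            · rintro ⟨hcA, hxc⟩
              exact ⟨hAW hcA, hxc⟩
          refine Finset.mem_filter.2 ⟨?_, by rw [hfe]; exact hx1⟩
          exact Finset.biUnion_subset_biUnion_of_subset_left scope hAW hxA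
        have hDbd : (D \ ({eu i, ev i} : Finset V)).card ≤ A.card * (k - t) :=
          bdry_bound scope (hbad i).2.2.2 hAW hDmem
        have hx0notN : x0 ∉ N := fun h => (Finset.mem_sdiff.1 h).2 hx0T
        have hDpair : (D ∩ ({eu i, ev i} : Finset V)).card ≤ 1 := by
          have hsub : D ∩ ({eu i, ev i} : Finset V)
              ⊆ ({eu i, ev i} : Finset V).erase x0 := by
            intro y hy
            obtain ⟨hyD, hyp⟩ := Finset.mem_inter.1 hy
            refine Finset.mem_erase.2 ⟨fun h => ?_, hyp⟩
            exact hx0notN (h ▸ (Finset.mem_filter.1 hyD).1)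
          calc (D ∩ ({eu i, ev i} : Finset V)).card
              ≤ (({eu i, ev i} : Finset V).erase x0).card := Finset.card_le_card hsub
            _ = ({eu i, ev i} : Finset V).card - 1 := Finset.card_erase_of_mem hx0pair
            _ ≤ 1 := by
                have := Finset.card_insert_le (eu i) ({ev i} : Finset V)
                simp at this; omega
        have hDcard : D.card ≤ A.card * (k - t) + 1 := by
          have := Finset.card_sdiff_add_card_inter D ({eu i, ev i} : Finset V)
          omega
        -- sum of degrees over N
        have hsumA : (∑ v ∈ A.biUnion scope, (A.filter (fun c => v ∈ scope c)).card)
            = A.card * k := by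
          rw [sum_deg scope A]; simp [hk, mul_comm]
        have hw0pos : 0 < (A.filter (fun c => w0 ∈ scope c)).card := deg_pos scope hw0A
        have hw0notN : w0 ∉ N := fun h => (Finset.mem_sdiff.1 h).2 hw0T
        have hsumN : (∑ v ∈ N, (A.filter (fun c => v ∈ scope c)).card) + 1
            ≤ A.card * k := by
          have hins : insert w0 N ⊆ A.biUnion scope := by
            intro y hy
            rcases Finset.mem_insert.1 hy with h | h
            · rw [h]; exact hw0A
            · exact hNsub h
          have h1 : (∑ v ∈ insert w0 N, (A.filter (fun c => v ∈ scope c)).card)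
              ≤ A.card * k := by
            rw [← hsumA]
            exact Finset.sum_le_sum_of_subset hins
          rw [Finset.sum_insert hw0notN] at h1
          omega
        have h2 := two_mul_le scope A N hNsub
        have hfinal : 2 * N.card ≤ A.card * k + A.card * (k - t) := by
          rw [← hD] at h2
          omega
        -- assemble
        have hcardT : ((Finset.univ.filter (fun j : Fin ℓ => j ≤ i)).biUnion W).card
            = A.card + T.card := by
          rw [hTi, hUnion, Finset.card_union_of_disjoint Finset.sdiff_disjoint]
        have hΓ : ((Finset.univ.filter (fun j : Fin ℓ => j ≤ i)).biUnion W).biUnion scope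
            = N ∪ T.biUnion scope := by
          rw [hTi, hUnion, biUnion_union' A T scope, hN, Finset.sdiff_union_self_eq_union]
        have hΓcard : (((Finset.univ.filter (fun j : Fin ℓ => j ≤ i)).biUnion W).biUnion
            scope).card ≤ N.card + (T.biUnion scope).card := by
          rw [hΓ]; exact Finset.card_union_le _ _
        have ihR := ih i' rfl
        have hcast : ((k - t : ℕ) : ℝ) = (k : ℝ) - (t : ℝ) := Nat.cast_sub htk
        have hfinR : (2 : ℝ) * N.card ≤ (A.card : ℝ) * k + A.card * ((k : ℝ) - t) := by
          have := hfinal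
          push_cast [hcast] at this ⊢
          exact_mod_cast this
        have hΓR : (((((Finset.univ.filter (fun j : Fin ℓ => j ≤ i)).biUnion W).biUnion
            scope).card : ℕ) : ℝ) ≤ (N.card : ℝ) + ((T.biUnion scope).card : ℝ) := by
          exact_mod_cast hΓcard
        rw [hcardT]
        push_cast
        nlinarith [ihR, hfinR, hΓR]
end

section
/- Let T ⊆ S ⊆ [n] and let C* be a constraint covered by S such that the boundary variables of C* within the constraints covered by S, excluding those in T, number at least k−t+1. Then for all α ∈ [q]^T, Π'_S(T = α) is proportional (as a function of α) to Π'_{S∖B}(T∖B = α_{T∖B}), where B = ∂C(S) ∩ C* are the boundary variables of C* in C(S). -/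
/-- Override an assignment `x` by `y` on the coordinates of `B`. -/
def override {V : Type*} [DecidableEq V] {q : ℕ} (B : Finset V)
    (y : (↑B : Set V) → Fin q) (x : V → Fin q) : V → Fin q :=
  fun i => if h : i ∈ B then y ⟨i, by simpa using h⟩ else x i

/-- The constraints entirely contained in the variable set `S`. -/
def CS {V ι : Type*} [Fintype ι] [DecidableEq V]
    (scope : ι → Finset V) (S : Finset V) : Finset ι :=
  Finset.univ.filter (fun C => scope C ⊆ S)

/-- The unnormalized marginal `Π'_S(T = α)`:
`∑_{x ∈ [q]^S, x_T = α} ∏_{C ∈ C(S)} μ_C(x)`. -/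
noncomputable def piMarg {V ι : Type*} [Fintype V] [Fintype ι] [DecidableEq V]
    {q : ℕ} (scope : ι → Finset V) (μ : ι → (V → Fin q) → ℝ) (z : Fin q)
    (S T : Finset V) (hTS : T ⊆ S) (α : (↑T : Set V) → Fin q) : ℝ :=
  ∑ x : ((↑S : Set V) → Fin q),
    if ∀ i : (↑T : Set V), x (Set.inclusion (Finset.coe_subset.mpr hTS) i) = α i
    then ∏ C ∈ CS scope S, μ C (override S x (fun _ => z)) else 0

section helpers

variable {V : Type*} [DecidableEq V] {q : ℕ}

/-- Glue an assignment on `S \ B` and one on `B` (with `B ⊆ S`) into one on `S`. -/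
def glue (S B : Finset V) (hBS : B ⊆ S)
    (w : (↑(S \ B) : Set V) → Fin q) (y : (↑B : Set V) → Fin q) :
    (↑S : Set V) → Fin q :=
  fun i => if h : (i : V) ∈ B then y ⟨i, by simpa using h⟩
    else w ⟨i, by
      simp only [Finset.coe_sdiff, Set.mem_diff]
      exact ⟨i.2, by simpa using h⟩⟩

def glueEquiv (S B : Finset V) (hBS : B ⊆ S) :
    ((↑(S \ B) : Set V) → Fin q) × ((↑B : Set V) → Fin q) ≃ ((↑S : Set V) → Fin q) where
  toFun p := glue S B hBS p.1 p.2
  invFun x := (fun i => x ⟨i, by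
      have := i.2
      simp only [Finset.coe_sdiff, Set.mem_diff] at this
      exact this.1⟩,
    fun i => x ⟨i, by
      have := i.2
      simp only [Finset.mem_coe] at this ⊢
      exact hBS this⟩)
  left_inv := by
    rintro ⟨w, y⟩
    refine Prod.ext ?_ ?_ <;> funext i
    · have hi : (i : V) ∉ B := by
        have := i.2
        simp only [Finset.coe_sdiff, Set.mem_diff, Finset.mem_coe] at this
        exact this.2
      simp [glue, hi]
    · have hi : (i : V) ∈ B := by simpa using i.2
      simp [glue, hi]
  right_inv := by
    intro x
    funext i
    by_cases hi : (i : V) ∈ B <;> simp [glue, hi]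

lemma sum_glue [Fintype V] (S B : Finset V) (hBS : B ⊆ S)
    (f : ((↑S : Set V) → Fin q) → ℝ) :
    ∑ x : ((↑S : Set V) → Fin q), f x
      = ∑ w : ((↑(S \ B) : Set V) → Fin q), ∑ y : ((↑B : Set V) → Fin q),
          f (glue S B hBS w y) := by
  rw [← Equiv.sum_comp (glueEquiv S B hBS) f, Fintype.sum_prod_type]
  rfl

/-- Fill in values on `B`: take `α` on `B ∩ T` and `y₂` on `B \ T`. -/
def fill (B T : Finset V) (α : (↑T : Set V) → Fin q)
    (y₂ : (↑(B \ T) : Set V) → Fin q) : (↑B : Set V) → Fin q :=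
  fun j => if h : (j : V) ∈ T then α ⟨j, by simpa using h⟩
    else y₂ ⟨j, by
      simp only [Finset.coe_sdiff, Set.mem_diff]
      exact ⟨j.2, by simpa using h⟩⟩

/-- The condition that `y` on `B` agrees with `α` on `B ∩ T`. -/
def agrees (B T : Finset V) (α : (↑T : Set V) → Fin q)
    (y : (↑B : Set V) → Fin q) : Prop :=
  ∀ j : (↑B : Set V), ∀ h : (j : V) ∈ T, y j = α ⟨j, by simpa using h⟩

instance decAgrees [Fintype V] (B T : Finset V) (α : (↑T : Set V) → Fin q)
    (y : (↑B : Set V) → Fin q) : Decidable (agrees B T α y) := by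
  unfold agrees; infer_instance

lemma sum_fill [Fintype V] (B T : Finset V) (α : (↑T : Set V) → Fin q)
    (f : ((↑B : Set V) → Fin q) → ℝ) :
    ∑ y : ((↑B : Set V) → Fin q),
        (if agrees B T α y then f y else 0)
      = ∑ y₂ : ((↑(B \ T) : Set V) → Fin q), f (fill B T α y₂) := by
  classical
  have hfr : ∀ y : ((↑B : Set V) → Fin q), agrees B T α y →
      fill B T α (fun j => y ⟨j, by
        have := j.2
        simp only [Finset.coe_sdiff, Set.mem_diff] at this
        exact this.1⟩) = y := by
    intro y hy
    funext j
    by_cases hj : (j : V) ∈ T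
    · simp only [fill, dif_pos hj]
      exact (hy j hj).symm
    · simp only [fill, dif_neg hj]
  rw [← Finset.sum_filter]
  refine Finset.sum_bij'
    (i := fun y _ => fun j => y ⟨j, by
      have := j.2
      simp only [Finset.coe_sdiff, Set.mem_diff] at this
      exact this.1⟩)
    (j := fun y₂ _ => fill B T α y₂) ?_ ?_ ?_ ?_ ?_
  · intro a ha; exact Finset.mem_univ _
  · intro a ha
    simp only [Finset.mem_filter, Finset.mem_univ, true_and]
    intro j h
    simp [fill, h]
  · intro y hy
    simp only [Finset.mem_filter, Finset.mem_univ, true_and] at hy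
    exact hfr y hy
  · intro y₂ _
    funext j
    have hj : (j : V) ∉ T := by
      have := j.2
      simp only [Finset.coe_sdiff, Set.mem_diff, Finset.mem_coe] at this
      exact this.2
    simp only [fill, dif_neg hj]
  · intro y hy
    simp only [Finset.mem_filter, Finset.mem_univ, true_and] at hy
    exact (congrArg f (hfr y hy)).symm

end helpers

/-- Removing a constraint `C*` contributing at least `k − t + 1` boundary
variables (outside `T`) does not change the marginal `Π'_S(T = ·)` up to a
proportionality constant. -/
theorem stmt_11 {V ι : Type*} [Fintype V] [Fintype ι]
    [DecidableEq V] [DecidableEq ι]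
    {q k t : ℕ} (hq : 0 < q)
    (scope : ι → Finset V) (μ : ι → (V → Fin q) → ℝ)
    (hk : ∀ C, (scope C).card = k)
    (hdep : ∀ C x y, (∀ i ∈ scope C, x i = y i) → μ C x = μ C y)
    (hunif : ∀ (C : ι) (B : Finset V), B ⊆ scope C → k - t + 1 ≤ B.card →
      ∀ x : V → Fin q,
        ∑ y : ((↑B : Set V) → Fin q), μ C (override B y x)
          = (q : ℝ) ^ B.card / (q : ℝ) ^ k)
    (S T : Finset V) (hTS : T ⊆ S)
    (Cstar : ι) (hCstar : scope Cstar ⊆ S)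
    (B : Finset V) (hBdef : B = scope Cstar ∩ bdry scope (CS scope S))
    (hB : k - t + 1 ≤ (B \ T).card) :
    ∃ c : ℝ, ∀ α : (↑T : Set V) → Fin q,
      piMarg scope μ ⟨0, hq⟩ S T hTS α =
        c * piMarg scope μ ⟨0, hq⟩ (S \ B) (T \ B)
              (Finset.sdiff_subset_sdiff hTS (Finset.Subset.refl B))
              (fun i => α (Set.inclusion
                (Finset.coe_subset.mpr Finset.sdiff_subset) i)) := by
  classical
  have hBsub : B ⊆ scope Cstar := hBdef ▸ Finset.inter_subset_left
  have hBS : B ⊆ S := hBsub.trans hCstar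
  have hBTne : (B \ T).Nonempty := by
    rw [← Finset.card_pos]
    exact lt_of_lt_of_le (Nat.succ_pos _) hB
  have hCstarCS : Cstar ∈ CS scope S := by
    simp [CS, hCstar]
  -- every constraint of `CS scope S` other than `Cstar` is disjoint from `B`
  have hdisj : ∀ C ∈ CS scope S, C ≠ Cstar → ∀ v ∈ scope C, v ∉ B := by
    intro C hC hne v hv hvB
    have hvb : v ∈ bdry scope (CS scope S) := by
      rw [hBdef] at hvB
      exact (Finset.mem_inter.mp hvB).2
    have hvc : v ∈ scope Cstar := hBsub hvB
    rw [bdry, Finset.mem_filter] at hvb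
    have h1 : C ∈ (CS scope S).filter (fun c => v ∈ scope c) := by
      simp [Finset.mem_filter, hC, hv]
    have h2 : Cstar ∈ (CS scope S).filter (fun c => v ∈ scope c) := by
      simp [Finset.mem_filter, hCstarCS, hvc]
    have : 1 < ((CS scope S).filter (fun c => v ∈ scope c)).card :=
      Finset.one_lt_card.mpr ⟨C, h1, Cstar, h2, hne⟩
    omega
  have hCSeq : CS scope (S \ B) = (CS scope S).erase Cstar := by
    ext C
    simp only [CS, Finset.mem_filter, Finset.mem_univ, true_and, Finset.mem_erase]
    constructor
    · intro h
      have hne : C ≠ Cstar := by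
        rintro rfl
        obtain ⟨v, hv⟩ := hBTne
        have hvB : v ∈ B := (Finset.mem_sdiff.mp hv).1
        have := h (hBsub hvB)
        exact (Finset.mem_sdiff.mp this).2 hvB
      exact ⟨hne, fun i hi => (Finset.mem_sdiff.mp (h hi)).1⟩
    · rintro ⟨hne, hsub⟩ i hi
      refine Finset.mem_sdiff.mpr ⟨hsub hi, ?_⟩
      exact hdisj C (by simp [CS, hsub]) hne i hi
  set z : Fin q := ⟨0, hq⟩ with hz
  refine ⟨(q : ℝ) ^ (B \ T).card / (q : ℝ) ^ k, fun α => ?_⟩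
  rw [piMarg, piMarg, sum_glue S B hBS, Finset.mul_sum]
  refine Finset.sum_congr rfl (fun w _ => ?_)
  -- abbreviations
  set α' : (↑(T \ B) : Set V) → Fin q :=
    (fun i => α (Set.inclusion (Finset.coe_subset.mpr Finset.sdiff_subset) i)) with hα'
  by_cases hA : ∀ i : (↑(T \ B) : Set V),
      w (Set.inclusion (Finset.coe_subset.mpr
        (Finset.sdiff_subset_sdiff hTS (Finset.Subset.refl B))) i) = α' i
  · -- condition on `T \ B` holds
    rw [if_pos hA]
    -- rewrite each inner summand
    have key : ∀ y : ((↑B : Set V) → Fin q),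
        (if ∀ i : (↑T : Set V),
            glue S B hBS w y (Set.inclusion (Finset.coe_subset.mpr hTS) i) = α i
          then ∏ C ∈ CS scope S,
            μ C (override S (glue S B hBS w y) (fun _ => z)) else 0)
        = (if agrees B T α y
            then μ Cstar (override S (glue S B hBS w y) (fun _ => z)) else 0)
          * ∏ C ∈ CS scope (S \ B), μ C (override (S \ B) w (fun _ => z)) := by
      intro y
      have hcond : (∀ i : (↑T : Set V),
          glue S B hBS w y (Set.inclusion (Finset.coe_subset.mpr hTS) i) = α i)
          ↔ agrees B T α y := by
        constructor
        · intro h j hjT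
          have := h ⟨j, by simpa using hjT⟩
          have hjB : (j : V) ∈ B := by simpa using j.2
          rw [show (Set.inclusion (Finset.coe_subset.mpr hTS)
              (⟨(j : V), by simpa using hjT⟩ : (↑T : Set V)))
              = ⟨(j : V), by simpa using hTS hjT⟩ from rfl] at this
          simp only [glue, dif_pos hjB] at this
          convert this using 2
        · intro h i
          show glue S B hBS w y ⟨(i : V), _⟩ = α i
          by_cases hiB : (i : V) ∈ B
          · simp only [glue, dif_pos hiB]
            have := h ⟨(i : V), by simpa using hiB⟩ (by simpa using i.2)
            convert this using 2
          · simp only [glue, dif_neg hiB]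
            have hiTB : (i : V) ∈ T \ B :=
              Finset.mem_sdiff.mpr ⟨by simpa using i.2, hiB⟩
            have := hA ⟨(i : V), by simpa using hiTB⟩
            rw [hα'] at this
            convert this using 2
      rw [if_congr hcond rfl rfl]
      by_cases hag : agrees B T α y
      · rw [if_pos hag, if_pos hag]
        rw [← Finset.mul_prod_erase _ _ hCstarCS, ← hCSeq]
        congr 1
        refine Finset.prod_congr rfl (fun C hC => ?_)
        have hCsub : scope C ⊆ S \ B := by
          simpa [CS] using hC
        refine hdep C _ _ (fun i hi => ?_)
        have hiSB : i ∈ S \ B := hCsub hi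
        have hiS : i ∈ S := (Finset.mem_sdiff.mp hiSB).1
        have hiB : i ∉ B := (Finset.mem_sdiff.mp hiSB).2
        simp only [override, glue, dif_pos hiS, dif_pos hiSB, dif_neg hiB]
      · rw [if_neg hag, if_neg hag, zero_mul]
    rw [Finset.sum_congr rfl (fun y _ => key y), ← Finset.sum_mul]
    rw [sum_fill B T α
      (fun y => μ Cstar (override S (glue S B hBS w y) (fun _ => z)))]
    have hover : ∀ y₂ : ((↑(B \ T) : Set V) → Fin q),
        override S (glue S B hBS w (fill B T α y₂)) (fun _ => z)
        = override (B \ T) y₂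
            (override S (glue S B hBS w (fill B T α (fun _ => z))) (fun _ => z)) := by
      intro y₂
      funext i
      by_cases hiBT : i ∈ B \ T
      · have hiB : i ∈ B := (Finset.mem_sdiff.mp hiBT).1
        have hiT : i ∉ T := (Finset.mem_sdiff.mp hiBT).2
        have hiS : i ∈ S := hBS hiB
        simp only [override, glue, fill, dif_pos hiBT, dif_pos hiS,
          dif_pos hiB, dif_neg hiT]
      · simp only [override, dif_neg hiBT]
        by_cases hiS : i ∈ S
        · simp only [dif_pos hiS, glue]
          by_cases hiB : i ∈ B
          · have hiT : i ∈ T := by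
              by_contra hiT
              exact hiBT (Finset.mem_sdiff.mpr ⟨hiB, hiT⟩)
            simp only [dif_pos hiB, fill, dif_pos hiT]
          · simp only [dif_neg hiB]
        · simp only [dif_neg hiS]
    rw [Finset.sum_congr rfl (fun y₂ _ => congrArg (μ Cstar) (hover y₂))]
    rw [hunif Cstar (B \ T) ((Finset.sdiff_subset).trans hBsub) hB]
  · -- condition on `T \ B` fails: both sides vanish
    rw [if_neg hA, mul_zero]
    refine Finset.sum_eq_zero (fun y _ => ?_)
    rw [if_neg]
    intro hcond
    apply hA
    intro i
    have hiT : (i : V) ∈ T := (Finset.mem_sdiff.mp (by simpa using i.2)).1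
    have hiB : (i : V) ∉ B := (Finset.mem_sdiff.mp (by simpa using i.2)).2
    have := hcond ⟨(i : V), by simpa using hiT⟩
    rw [show (Set.inclusion (Finset.coe_subset.mpr hTS)
        (⟨(i : V), by simpa using hiT⟩ : (↑T : Set V)))
        = ⟨(i : V), by simpa using hTS hiT⟩ from rfl] at this
    simp only [glue, dif_neg hiB] at this
    rw [hα']
    convert this using 2
end

section
/- If H_I is (s_1, e_1)-expanding and S is a set of variables with |S| < (e_1 − e_2)s_1 for some e_2 ∈ (0, e_1), then there exists a set Cl(S) ⊇ S such that H_I − Cl(S) is (s_2, e_2)-expanding with s_2 ≥ s_1 − |S|/(e_1 − e_2), and |Cl(S)| ≤ (e_1/(e_1 − e_2))|S|. -/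
/-- If `H` is `(s₁, e₁)`-expanding and `|S| < (e₁ − e₂)s₁`, there is a closure
`Cl(S) ⊇ S` with `|Cl(S)| ≤ (e₁/(e₁−e₂))|S|` such that `H − Cl(S)` is
`(s₂, e₂)`-expanding for some `s₂ ≥ s₁ − |S|/(e₁−e₂)`. -/
theorem stmt_16 {V ι : Type*} [DecidableEq V] [DecidableEq ι]
    [Fintype V] [Fintype ι]
    (scope : ι → Finset V) (s₁ : ℕ) (e₁ e₂ : ℝ) (he₂ : 0 < e₂) (he : e₂ < e₁)
    (hexp : ∀ T : Finset ι, T.card ≤ s₁ → e₁ * T.card ≤ (T.biUnion scope).card)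
    (S : Finset V) (hS : (S.card : ℝ) < (e₁ - e₂) * s₁) :
    ∃ Cl : Finset V, S ⊆ Cl ∧
      (Cl.card : ℝ) ≤ (e₁ / (e₁ - e₂)) * S.card ∧
      ∃ s₂ : ℕ, (s₁ : ℝ) - (S.card : ℝ) / (e₁ - e₂) ≤ s₂ ∧
        ∀ T : Finset ι, (∀ c ∈ T, ¬ scope c ⊆ Cl) → T.card ≤ s₂ →
          e₂ * T.card ≤ ((T.biUnion scope) \ Cl).card := by
  classical
  have hee : (0:ℝ) < e₁ - e₂ := by linarith
  -- the collection of "bad" (non-expanding w.r.t. S) sets of hyperedges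
  set 𝒞 : Finset (Finset ι) := Finset.univ.filter
    (fun T : Finset ι => T.card ≤ s₁ ∧
      (((T.biUnion scope) \ S).card : ℝ) ≤ e₂ * T.card) with h𝒞
  have hne : 𝒞.Nonempty := ⟨∅, by simp [h𝒞]⟩
  obtain ⟨T₀, hT₀mem, hT₀max⟩ := Finset.exists_max_image 𝒞 Finset.card hne
  simp only [h𝒞, Finset.mem_filter, Finset.mem_univ, true_and] at hT₀mem
  obtain ⟨hcard, hsmall⟩ := hT₀mem
  set Γ₀ : Finset V := T₀.biUnion scope with hΓ₀
  -- basic bound on |T₀|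
  have hexp₀ := hexp T₀ hcard
  have hΓsplit : (Γ₀.card : ℝ) ≤ ((Γ₀ \ S).card : ℝ) + S.card := by
    have : Γ₀.card ≤ (Γ₀ \ S).card + S.card := by
      calc Γ₀.card ≤ ((Γ₀ \ S) ∪ S).card := by
            apply Finset.card_le_card
            intro v hv
            by_cases hvS : v ∈ S
            · exact Finset.mem_union_right _ hvS
            · exact Finset.mem_union_left _ (Finset.mem_sdiff.2 ⟨hv, hvS⟩)
        _ ≤ (Γ₀ \ S).card + S.card := Finset.card_union_le _ _
    exact_mod_cast this
  have hT₀bound : ((T₀.card : ℝ)) ≤ (S.card : ℝ) / (e₁ - e₂) := by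
    rw [le_div_iff₀ hee]
    nlinarith
  -- the closure
  set Cl : Finset V := S ∪ Γ₀ with hCl
  refine ⟨Cl, Finset.subset_union_left, ?_, ?_⟩
  · -- size bound on Cl
    have hClcard : Cl.card ≤ S.card + (Γ₀ \ S).card := by
      calc Cl.card = (S ∪ (Γ₀ \ S)).card := by
            congr 1
            rw [hCl, Finset.union_sdiff_self_eq_union]
        _ ≤ S.card + (Γ₀ \ S).card := Finset.card_union_le _ _
    have h1 : (Cl.card : ℝ) ≤ (S.card : ℝ) + e₂ * T₀.card := by
      have := (Nat.cast_le (α := ℝ)).2 hClcard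
      push_cast at this
      linarith
    have h2 : e₂ * (T₀.card : ℝ) ≤ e₂ * ((S.card : ℝ) / (e₁ - e₂)) :=
      mul_le_mul_of_nonneg_left hT₀bound he₂.le
    have : (S.card : ℝ) + e₂ * ((S.card : ℝ) / (e₁ - e₂)) = e₁ / (e₁ - e₂) * S.card := by
      field_simp
      ring
    linarith
  · -- the residual expansion parameter
    have hT₀lt : T₀.card < s₁ := by
      by_contra h
      push_neg at h
      have h1 : (s₁ : ℝ) ≤ T₀.card := by exact_mod_cast h
      have := hT₀bound
      rw [le_div_iff₀ hee] at this
      nlinarith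
    refine ⟨s₁ - T₀.card, ?_, ?_⟩
    · have hcast : ((s₁ - T₀.card : ℕ) : ℝ) = (s₁ : ℝ) - T₀.card := by
        rw [Nat.cast_sub hT₀lt.le]
      rw [hcast]
      linarith [hT₀bound]
    · intro T hTscope hTcard
      by_contra hc
      push_neg at hc
      -- T and T₀ are disjoint
      have hdisj : Disjoint T T₀ := by
        rw [Finset.disjoint_left]
        intro c hcT hcT₀
        exact hTscope c hcT (Finset.Subset.trans
          (Finset.subset_biUnion_of_mem scope hcT₀) Finset.subset_union_right)
      set U : Finset ι := T ∪ T₀ with hU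
      have hUcard : U.card = T.card + T₀.card := Finset.card_union_of_disjoint hdisj
      have hUle : U.card ≤ s₁ := by omega
      -- Γ(U) \ S ⊆ (Γ₀ \ S) ∪ (Γ(T) \ Cl)
      have hsub : (U.biUnion scope) \ S ⊆ (Γ₀ \ S) ∪ ((T.biUnion scope) \ Cl) := by
        intro v hv
        rw [Finset.mem_sdiff, Finset.mem_biUnion] at hv
        obtain ⟨⟨c, hcU, hvc⟩, hvS⟩ := hv
        rw [hU, Finset.mem_union] at hcU
        rcases hcU with hcT | hcT₀
        · by_cases hvCl : v ∈ Cl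
          · rcases Finset.mem_union.1 hvCl with h | h
            · exact absurd h hvS
            · exact Finset.mem_union_left _ (Finset.mem_sdiff.2 ⟨h, hvS⟩)
          · exact Finset.mem_union_right _
              (Finset.mem_sdiff.2 ⟨Finset.mem_biUnion.2 ⟨c, hcT, hvc⟩, hvCl⟩)
        · exact Finset.mem_union_left _
            (Finset.mem_sdiff.2 ⟨Finset.mem_biUnion.2 ⟨c, hcT₀, hvc⟩, hvS⟩)
      have hUsmall : (((U.biUnion scope) \ S).card : ℝ) ≤ e₂ * U.card := by
        have h1 : ((U.biUnion scope) \ S).card ≤ (Γ₀ \ S).card + ((T.biUnion scope) \ Cl).card :=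
          le_trans (Finset.card_le_card hsub) (Finset.card_union_le _ _)
        have h1' : (((U.biUnion scope) \ S).card : ℝ)
            ≤ ((Γ₀ \ S).card : ℝ) + (((T.biUnion scope) \ Cl).card : ℝ) := by exact_mod_cast h1
        have h2 : (U.card : ℝ) = (T.card : ℝ) + T₀.card := by exact_mod_cast hUcard
        nlinarith
      have hUmem : U ∈ 𝒞 := by
        simp only [h𝒞, Finset.mem_filter, Finset.mem_univ, true_and]
        exact ⟨hUle, hUsmall⟩
      have := hT₀max U hUmem
      have hT0 : T.card = 0 := by omega
      have hTe : T = ∅ := Finset.card_eq_zero.1 hT0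
      rw [hTe] at hc
      simp at hc
end

section
/- Fix constants k ≥ t ≥ 2 and ε > 0. With probability tending to 1 as n → ∞, a random k-uniform CSP instance with m = n^{t/2−ε} constraints (each scope chosen independently uniformly from [n]^k) is (n^{ε/(t−2)}, k − t/2 + ε/2)-expanding. -/
/-!
Union bound over the size `r` of a set `T` of constraints witnessing non-expansion. If
`|Γ(T)| ≤ v`, then `Γ(T)` lies in one of `C(n, v)` sets of `v` variables, so `T` is bad with
probability at most `C(n, v) (v/n)^{kr}`. Summing over the `C(m, r)` choices of `T`, with
`v = ⌊e r⌋` and `c = k - e = (t - ε)/2`, bounds the `r`-th term by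
`(exp (k + 1) (m/r) (kr/n)^c)^r`. For `r ≤ n^{ε/(t-2)}` and `m ≤ n^{t/2-ε}` the base is
`O(n^γ)` with `γ = max (-ε/2) (-ε²/(2(t-2))) < 0`, so the geometric series is `O(n^γ) → 0`.
-/

open Filter Finset Real
open Fintype (card piFinset mem_piFinset card_piFinset)

-- `Γ(T)` in the constraint hypergraph
def neighborhood {ι κ β : Type*} [Fintype κ] [DecidableEq β] (S : ι → κ → β) (T : Finset ι) :
    Finset β :=
  T.biUnion fun c => univ.image (S c)

def IsExpanding {ι κ β : Type*} [Fintype κ] [DecidableEq β] (S : ι → κ → β) (s e : ℝ) : Prop :=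
  ∀ T : Finset ι, (#T : ℝ) ≤ s → e * #T ≤ #(neighborhood S T)

section Counting

variable {ι κ β : Type*} [Fintype ι] [DecidableEq ι] [Fintype κ] [DecidableEq κ] [Fintype β]
  [DecidableEq β]

theorem card_filter_neighborhood_subset (T : Finset ι) (A : Finset β) :
    #{S : ι → κ → β | neighborhood S T ⊆ A} =
      (#A ^ card κ) ^ #T * (card β ^ card κ) ^ (card ι - #T) := by
  have h : ({S : ι → κ → β | neighborhood S T ⊆ A} : Finset _) =
      piFinset fun c => if c ∈ T then piFinset fun _ => A else univ := by
    ext S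
    simp only [neighborhood, mem_filter, mem_univ, true_and, mem_piFinset, biUnion_subset,
      image_subset_iff]
    refine forall_congr' fun c => ?_
    split_ifs with hc <;> simp [hc]
  simp only [h, card_piFinset, apply_ite card, prod_const, card_univ, Fintype.card_fun,
    prod_ite, filter_mem_eq_inter, univ_inter, filter_not, card_univ_sdiff]

theorem card_filter_card_neighborhood_le (T : Finset ι) {v : ℕ} (hv : v ≤ card β) :
    #{S : ι → κ → β | #(neighborhood S T) ≤ v} ≤
      (card β).choose v * ((v ^ card κ) ^ #T * (card β ^ card κ) ^ (card ι - #T)) := by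
  calc #{S : ι → κ → β | #(neighborhood S T) ≤ v}
      ≤ #((powersetCard v univ).biUnion fun A => {S : ι → κ → β | neighborhood S T ⊆ A}) := by
        refine card_le_card fun S hS => ?_
        obtain ⟨A, hSA, hA⟩ := exists_superset_card_eq (mem_filter.1 hS).2 hv
        exact mem_biUnion.2
          ⟨A, mem_powersetCard.2 ⟨subset_univ A, hA⟩, mem_filter.2 ⟨mem_univ S, hSA⟩⟩
    _ ≤ ∑ A ∈ powersetCard v univ, #{S : ι → κ → β | neighborhood S T ⊆ A} := card_biUnion_le
    _ = _ := by
        rw [Finset.sum_congr rfl fun A hA => by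
          rw [card_filter_neighborhood_subset, (mem_powersetCard.1 hA).2], sum_const,
          card_powersetCard, card_univ, smul_eq_mul]

theorem card_filter_exists_card_neighborhood_lt_le {s : ℕ} {e : ℝ} (he : 0 ≤ e)
    (hs : e * s ≤ card β) :
    #{S : ι → κ → β | ∃ T : Finset ι, #T ≤ s ∧ (#(neighborhood S T) : ℝ) < e * #T} ≤
      ∑ r ∈ Icc 1 s, (card ι).choose r * ((card β).choose ⌊e * r⌋₊ *
        ((⌊e * r⌋₊ ^ card κ) ^ r * (card β ^ card κ) ^ (card ι - r))) := by
  set bad : ℕ → Finset ι → Finset (ι → κ → β) := fun r T => {S | #(neighborhood S T) ≤ ⌊e * r⌋₊}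
  calc _ ≤ #((Icc 1 s).biUnion fun r => (powersetCard r univ).biUnion (bad r)) := by
        refine card_le_card fun S hS => ?_
        obtain ⟨T, hTs, hST⟩ := (mem_filter.1 hS).2
        have hT : 0 < #T := Nat.pos_of_ne_zero fun h => by
          simp only [h, CharP.cast_eq_zero, mul_zero] at hST
          exact hST.not_ge (Nat.cast_nonneg _)
        simp only [mem_biUnion, mem_Icc, mem_powersetCard_univ]
        exact ⟨#T, ⟨hT, hTs⟩, T, rfl, mem_filter.2 ⟨mem_univ S, Nat.le_floor hST.le⟩⟩
    _ ≤ ∑ r ∈ Icc 1 s, ∑ T ∈ powersetCard r univ, #(bad r T) :=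
        card_biUnion_le.trans (sum_le_sum fun r _ => card_biUnion_le)
    _ ≤ _ := by
        refine sum_le_sum fun r hr => ?_
        have hv : ⌊e * r⌋₊ ≤ card β := by
          refine Nat.floor_le_of_le ?_
          have hr : (r : ℝ) ≤ s := by exact_mod_cast (mem_Icc.1 hr).2
          exact (mul_le_mul_of_nonneg_left hr he).trans hs
        calc ∑ T ∈ powersetCard r univ, #(bad r T)
            ≤ ∑ T ∈ powersetCard r univ, (card β).choose ⌊e * r⌋₊ *
                ((⌊e * r⌋₊ ^ card κ) ^ r * (card β ^ card κ) ^ (card ι - r)) :=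
              sum_le_sum fun T hT => by
                obtain rfl := mem_powersetCard_univ.1 hT
                exact card_filter_card_neighborhood_le T hv
          _ = _ := by rw [sum_const, card_powersetCard, card_univ, smul_eq_mul]

end Counting

theorem Nat.choose_le_exp_mul_div_pow (n r : ℕ) : (n.choose r : ℝ) ≤ exp r * (n / r) ^ r := by
  rcases Nat.eq_zero_or_pos r with rfl | hr
  · simp
  have hr' : (0 : ℝ) < r := by exact_mod_cast hr
  calc (n.choose r : ℝ) ≤ n ^ r / r.factorial := Nat.choose_le_pow_div r n
    _ = (r : ℝ) ^ r / r.factorial * (n / r) ^ r := by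
        rw [div_pow]; field_simp
    _ ≤ exp r * (n / r) ^ r := by gcongr; exact pow_div_factorial_le_exp _ hr'.le r

theorem Nat.choose_mul_pow_div_pow_le (n v N : ℕ) (hvN : v ≤ N) :
    (n.choose v * v ^ N : ℝ) / n ^ N ≤ exp v * (v / n) ^ (N - v) := by
  obtain ⟨d, rfl⟩ := Nat.exists_eq_add_of_le hvN
  rcases Nat.eq_zero_or_pos n with rfl | hn
  · rcases Nat.eq_zero_or_pos (v + d) with h | h
    · obtain ⟨rfl, rfl⟩ : v = 0 ∧ d = 0 := by omega
      simp
    · simp [zero_pow h.ne']; positivity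
  calc (n.choose v * v ^ (v + d) : ℝ) / n ^ (v + d)
      ≤ (n ^ v / v.factorial * v ^ (v + d)) / n ^ (v + d) := by
        gcongr; exact Nat.choose_le_pow_div v n
    _ = (v : ℝ) ^ v / v.factorial * (v / n) ^ d := by
        rw [div_pow, pow_add, pow_add]; field_simp
    _ ≤ exp v * (v / n) ^ (v + d - v) := by
        rw [Nat.add_sub_cancel_left]; gcongr; exact pow_div_factorial_le_exp _ (Nat.cast_nonneg v) v

theorem choose_mul_choose_mul_pow_div_le {m n k r v : ℕ} {c : ℝ} (hn : 0 < n) (hrm : r ≤ m)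
    (hc : 0 ≤ c) (hv : v + c * r ≤ k * r) (hrk : k * r ≤ n) :
    (m.choose r * (n.choose v * ((v ^ k) ^ r * (n ^ k) ^ (m - r))) : ℝ) / (n ^ k) ^ m ≤
      (exp (k + 1) * (m / r) * (k * r / n) ^ c) ^ r := by
  have hn' : (0 : ℝ) < n := by exact_mod_cast hn
  have hvN : v ≤ k * r := by exact_mod_cast (le_add_of_nonneg_right (by positivity)).trans hv
  have hx1 : (k * r / n : ℝ) ≤ 1 := (div_le_one hn').2 (by exact_mod_cast hrk)
  have hm : ((n : ℝ) ^ k) ^ m = (n ^ k) ^ (m - r) * (n ^ k) ^ r := by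
    rw [← pow_add, Nat.sub_add_cancel hrm]
  calc (m.choose r * (n.choose v * ((v ^ k) ^ r * (n ^ k) ^ (m - r))) : ℝ) / (n ^ k) ^ m
      = m.choose r * ((n.choose v * v ^ (k * r)) / n ^ (k * r)) := by
        rw [hm, pow_mul, pow_mul]; field_simp
    _ ≤ (exp r * (m / r) ^ r) * (exp v * (v / n) ^ (k * r - v)) := by
        gcongr
        exacts [Nat.choose_le_exp_mul_div_pow m r, Nat.choose_mul_pow_div_pow_le n v _ hvN]
    _ ≤ (exp r * (m / r) ^ r) * (exp (k * r) * (k * r / n) ^ (c * r)) := by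
        gcongr
        · exact_mod_cast hvN
        · rw [← rpow_natCast]
          calc ((v : ℝ) / n) ^ ((k * r - v : ℕ) : ℝ) ≤ (k * r / n) ^ ((k * r - v : ℕ) : ℝ) := by
                gcongr; exact_mod_cast hvN
            _ ≤ (k * r / n) ^ (c * r) := by
                refine rpow_le_rpow_of_exponent_ge' (by positivity) hx1 (by positivity) ?_
                push_cast [hvN]; linarith
    _ = (exp (k + 1) * (m / r) * (k * r / n) ^ c) ^ r := by
        rw [rpow_mul_natCast (by positivity), mul_pow, mul_pow, ← exp_nat_mul,
          show (r : ℝ) * (k + 1) = r + k * r by ring, exp_add]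
        ring

theorem div_mul_rpow_le {x m r k α β c : ℝ} (hx : 1 ≤ x) (hr : 1 ≤ r) (hrx : r ≤ x ^ α)
    (hm : m ≤ x ^ β) (hk : 0 ≤ k) :
    m / r * (k * r / x) ^ c ≤ k ^ c * x ^ (β + α * max (c - 1) 0 - c) := by
  have hx0 : 0 < x := by linarith
  have hr0 : 0 < r := by linarith
  have hrc : r ^ (c - 1) ≤ x ^ (α * max (c - 1) 0) := by
    rw [rpow_mul hx0.le]
    calc r ^ (c - 1) ≤ r ^ max (c - 1) 0 := rpow_le_rpow_of_exponent_le hr (le_max_left _ _)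
      _ ≤ (x ^ α) ^ max (c - 1) 0 := rpow_le_rpow hr0.le hrx (le_max_right _ _)
  calc m / r * (k * r / x) ^ c = k ^ c * (m * r ^ (c - 1) / x ^ c) := by
        rw [mul_div_assoc, mul_rpow hk (by positivity), div_rpow hr0.le hx0.le,
          rpow_sub_one hr0.ne']
        field_simp
    _ ≤ k ^ c * (x ^ β * x ^ (α * max (c - 1) 0) / x ^ c) := by
        gcongr
    _ = k ^ c * x ^ (β + α * max (c - 1) 0 - c) := by
        rw [rpow_sub hx0, rpow_add hx0]

theorem sum_Icc_pow_le_two_mul {y : ℝ} (hy0 : 0 ≤ y) (hy : y ≤ 1 / 2) (s : ℕ) :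
    ∑ r ∈ Icc 1 s, y ^ r ≤ 2 * y := by
  calc ∑ r ∈ Icc 1 s, y ^ r = ∑ r ∈ Ico 1 (s + 1), y ^ r := rfl
    _ ≤ y ^ 1 / (1 - y) := geom_sum_Ico_le_of_lt_one hy0 (by linarith)
    _ ≤ 2 * y := by rw [pow_one, div_le_iff₀ (by linarith)]; nlinarith

theorem choose_mul_choose_floor_mul_pow_div_le {m k n r : ℕ} {e c α β : ℝ} (hn : 1 < n)
    (he : 0 ≤ e) (hc : 0 ≤ c) (hec : e + c ≤ k) (hr : 1 ≤ r) (hrm : r ≤ m) (hkr : k * r ≤ n)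
    (hrα : (r : ℝ) ≤ n ^ α) (hm : (m : ℝ) ≤ n ^ β) :
    (m.choose r * (n.choose ⌊e * r⌋₊ * ((⌊e * r⌋₊ ^ k) ^ r * (n ^ k) ^ (m - r))) : ℝ) /
        (n ^ k) ^ m ≤
      (exp (k + 1) * k ^ c * (n : ℝ) ^ (β + α * max (c - 1) 0 - c)) ^ r := by
  have hfloor := Nat.floor_le (mul_nonneg he (Nat.cast_nonneg r))
  refine (choose_mul_choose_mul_pow_div_le (by omega) hrm hc (by nlinarith) hkr).trans ?_
  refine pow_le_pow_left₀ (by positivity) ?_ r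
  rw [mul_assoc, mul_assoc (exp _)]
  exact mul_le_mul_of_nonneg_left (div_mul_rpow_le (by exact_mod_cast hn.le)
    (by exact_mod_cast hr) hrα hm (Nat.cast_nonneg k)) (exp_pos _).le

open Classical in
theorem card_filter_not_expanding_div_le {m k n : ℕ} {e c α β : ℝ} (hn : 1 < n)
    (he : 0 ≤ e) (hβc : β ≤ c) (hec : e + c ≤ k) (hkn : k * min ⌊(n : ℝ) ^ α⌋₊ m ≤ n)
    (hm : (m : ℝ) ≤ n ^ β)
    (hy : exp (k + 1) * k ^ c * (n : ℝ) ^ (β + α * max (c - 1) 0 - c) ≤ 1 / 2) :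
    (#{S : Fin m → Fin k → Fin n | ¬ IsExpanding S (n ^ α) e} : ℝ) / ((n ^ k) ^ m : ℕ) ≤
      2 * (exp (k + 1) * k ^ c * (n : ℝ) ^ (β + α * max (c - 1) 0 - c)) := by
  set s := min ⌊(n : ℝ) ^ α⌋₊ m
  -- a constraint exists only if `1 ≤ m ≤ n ^ β`, which forces `0 ≤ β ≤ c`
  have hc : 0 < s → 0 ≤ c := fun hs => hβc.trans' <| not_lt.1 fun hβ =>
    (rpow_lt_one_of_one_lt_of_neg (by exact_mod_cast hn) hβ).not_ge <|
      (Nat.one_le_cast.2 (hs.trans_le (min_le_right _ _))).trans hm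
  have hsub : ({S : Fin m → Fin k → Fin n | ¬ IsExpanding S (n ^ α) e} : Finset _) ⊆
      ({S : Fin m → Fin k → Fin n |
        ∃ T : Finset (Fin m), #T ≤ s ∧ (#(neighborhood S T) : ℝ) < e * #T} : Finset _) := by
    intro S hS
    simp only [IsExpanding, mem_filter, mem_univ, true_and, not_forall, not_le, exists_prop]
      at hS ⊢
    obtain ⟨T, hTα, hT⟩ := hS
    exact ⟨T, le_min (Nat.le_floor hTα) ((card_le_univ T).trans_eq (Fintype.card_fin m)), hT⟩
  have hes : e * s ≤ n := by
    rcases Nat.eq_zero_or_pos s with hs | hs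
    · simp [hs]
    · calc e * s ≤ k * s := by gcongr; linarith [hc hs]
        _ ≤ n := by exact_mod_cast hkn
  have hcount := card_filter_exists_card_neighborhood_lt_le (ι := Fin m) (κ := Fin k) (β := Fin n)
    (s := s) he (by simpa using hes)
  simp only [Fintype.card_fin] at hcount
  calc _ ≤ (∑ r ∈ Icc 1 s, (m.choose r * (n.choose ⌊e * r⌋₊ *
        ((⌊e * r⌋₊ ^ k) ^ r * (n ^ k) ^ (m - r))) : ℕ) : ℝ) / ((n ^ k) ^ m : ℕ) := by
        gcongr
        exact_mod_cast (card_le_card hsub).trans hcount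
    _ ≤ ∑ r ∈ Icc 1 s, (exp (k + 1) * k ^ c * (n : ℝ) ^ (β + α * max (c - 1) 0 - c)) ^ r := by
        push_cast
        rw [sum_div]
        refine sum_le_sum fun r hr => ?_
        obtain ⟨hr1, hrs⟩ := mem_Icc.1 hr
        exact choose_mul_choose_floor_mul_pow_div_le hn he (hc (hr1.trans hrs)) hec hr1
          (hrs.trans (min_le_right _ _)) ((Nat.mul_le_mul_left k hrs).trans hkn)
          ((Nat.cast_le.2 (hrs.trans (min_le_left _ _))).trans (Nat.floor_le (by positivity))) hm
    _ ≤ _ := sum_Icc_pow_le_two_mul (by positivity) hy s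

theorem one_sub_le_card_expanding_div {m k n : ℕ} {e c α β : ℝ} (hn : 1 < n)
    (he : 0 ≤ e) (hβc : β ≤ c) (hec : e + c ≤ k) (hkn : k * min ⌊(n : ℝ) ^ α⌋₊ m ≤ n)
    (hm : (m : ℝ) ≤ n ^ β)
    (hy : exp (k + 1) * k ^ c * (n : ℝ) ^ (β + α * max (c - 1) 0 - c) ≤ 1 / 2) :
    1 - 2 * (exp (k + 1) * k ^ c * (n : ℝ) ^ (β + α * max (c - 1) 0 - c)) ≤
      (Nat.card {S : Fin m → Fin k → Fin n // IsExpanding S (n ^ α) e} : ℝ) /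
        ((n ^ k) ^ m : ℕ) := by
  classical
  have htotal : (0 : ℝ) < ((n ^ k) ^ m : ℕ) := by have := hn.pos; positivity
  have hsplit := card_filter_add_card_filter_not (s := (univ : Finset (Fin m → Fin k → Fin n)))
    fun S => IsExpanding S (n ^ α) e
  simp only [card_univ, Fintype.card_fun, Fintype.card_fin] at hsplit
  rw [← Nat.cast_inj (R := ℝ), Nat.cast_add] at hsplit
  rw [Nat.card_eq_fintype_card, Fintype.card_subtype, eq_sub_of_add_eq hsplit, sub_div,
    div_self htotal.ne']
  linarith [card_filter_not_expanding_div_le hn he hβc hec hkn hm hy]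

theorem eventually_mul_min_floor_rpow_le (k : ℕ) {α β : ℝ} (h : min α β < 1) :
    ∀ᶠ n : ℕ in atTop, k * min ⌊(n : ℝ) ^ α⌋₊ ⌊(n : ℝ) ^ β⌋₊ ≤ n := by
  have hlim := ((tendsto_rpow_atTop (sub_pos.2 h)).comp
    tendsto_natCast_atTop_atTop).eventually_ge_atTop (k : ℝ)
  filter_upwards [hlim, eventually_gt_atTop 0] with n hk hn
  have hn' : (0 : ℝ) < n := by exact_mod_cast hn
  have hfloor : ((min ⌊(n : ℝ) ^ α⌋₊ ⌊(n : ℝ) ^ β⌋₊ : ℕ) : ℝ) ≤ n ^ min α β := by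
    rcases min_choice α β with hθ | hθ <;> rw [hθ]
    · exact (Nat.cast_le.2 (min_le_left _ _)).trans (Nat.floor_le (by positivity))
    · exact (Nat.cast_le.2 (min_le_right _ _)).trans (Nat.floor_le (by positivity))
  have : (k : ℝ) * (min ⌊(n : ℝ) ^ α⌋₊ ⌊(n : ℝ) ^ β⌋₊ : ℕ) ≤ n :=
    calc _ ≤ (n : ℝ) ^ (1 - min α β) * n ^ min α β :=
          mul_le_mul hk hfloor (Nat.cast_nonneg _) (by positivity)
      _ = n := by rw [← rpow_add hn']; simp
  exact_mod_cast this

theorem expansion_exponent_neg {t ε : ℝ} (ht : 2 < t) (hε : 0 < ε) :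
    t / 2 - ε + ε / (t - 2) * max ((t - ε) / 2 - 1) 0 - (t - ε) / 2 < 0 := by
  rcases le_total ((t - ε) / 2 - 1) 0 with h | h
  · rw [max_eq_right h]; linarith
  · have : ε / (t - 2) * ((t - ε) / 2 - 1) = ε / 2 - ε ^ 2 / (2 * (t - 2)) := by
      field_simp [(sub_pos.2 ht).ne']; ring
    rw [max_eq_left h, this]
    have : 0 < ε ^ 2 / (2 * (t - 2)) := by have := sub_pos.2 ht; positivity
    linarith

theorem min_div_sub_two_lt_one {t ε : ℝ} (ht : 2 < t) :
    min (ε / (t - 2)) (t / 2 - ε) < 1 := by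
  by_contra! h
  have h1 := (le_min_iff.1 h).1
  have h2 := (le_min_iff.1 h).2
  rw [le_div_iff₀ (sub_pos.2 ht)] at h1
  linarith

/-- With probability tending to `1` as `n → ∞`, a random `k`-uniform CSP
instance with `m = n^{t/2−ε}` constraints, each scope drawn uniformly from
`[n]^k`, is `(n^{ε/(t−2)}, k − t/2 + ε/2)`-expanding. -/
theorem stmt_17 (k t : ℕ) (ε : ℝ) (ht : 2 < t) (htk : t ≤ k) (hε : 0 < ε) :
    Tendsto (fun n : ℕ =>
      ((Nat.card {S : Fin ⌊(n : ℝ) ^ ((t : ℝ) / 2 - ε)⌋₊ → Fin k → Fin n //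
          ∀ T : Finset (Fin ⌊(n : ℝ) ^ ((t : ℝ) / 2 - ε)⌋₊),
            (T.card : ℝ) ≤ (n : ℝ) ^ (ε / ((t : ℝ) - 2)) →
              ((k : ℝ) - (t : ℝ) / 2 + ε / 2) * T.card ≤
                ((T.biUnion fun c =>
                  Finset.image (S c) Finset.univ).card : ℝ)} : ℝ) /
        (((n ^ k) ^ ⌊(n : ℝ) ^ ((t : ℝ) / 2 - ε)⌋₊ : ℕ) : ℝ)))
      atTop (nhds 1) := by
  have ht' : (2 : ℝ) < t := by exact_mod_cast ht
  have htk' : (t : ℝ) ≤ k := by exact_mod_cast htk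
  set c := ((t : ℝ) - ε) / 2 with hc
  set γ := (t : ℝ) / 2 - ε + ε / (t - 2) * max (c - 1) 0 - c
  have hy : Tendsto (fun n : ℕ => exp (k + 1) * k ^ c * (n : ℝ) ^ γ) atTop (nhds 0) := by
    simpa using ((tendsto_rpow_neg_atTop (neg_pos.2 (expansion_exponent_neg ht' hε))).comp
      tendsto_natCast_atTop_atTop).const_mul (exp (k + 1) * k ^ c)
  refine tendsto_of_tendsto_of_tendsto_of_le_of_le' (by simpa using (hy.const_mul 2).const_sub 1)
    tendsto_const_nhds ?_ (Eventually.of_forall fun n => ?_)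
  · filter_upwards [eventually_gt_atTop 1, hy.eventually_le_const (by norm_num : (0 : ℝ) < 1 / 2),
      eventually_mul_min_floor_rpow_le k (min_div_sub_two_lt_one (ε := ε) ht')] with n hn hyn hkn
    exact one_sub_le_card_expanding_div hn (by linarith) (by linarith [hc]) (by linarith [hc]) hkn
      (Nat.floor_le (by positivity)) hyn
  · refine div_le_one_of_le₀ ?_ (Nat.cast_nonneg _)
    exact_mod_cast (Finite.card_subtype_le _).trans_eq (by simp)
end
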